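/- Let T > 1, let σ be a real number, and let z be a complex number with z ∉ (−∞, 0], where z^s denotes the principal branch and arg z ∈ (−π, π). Assume either (σ > 0 and |z| < 1) or (σ < 0 and |z| > 1). Then |z^s / sin(π s)| ≤ 4·e^{σ·log|z|}·e^{−T(π + arg z)} for s = σ + iT, and |z^s / sin(π s)| ≤ 4·e^{σ·log|z|}·e^{−T(π − arg z)} for s = σ − iT. -/

import Mathlib

open scoped Real

/-! The numerator satisfies `‖z ^ s‖ ≤ ‖z‖ ^ Re s · e^{-arg z · Im s}`, while
`‖sin w‖ ≥ sinh |Im w|` (from `2 sin w = i (e^{-iw} - e^{iw})` and the reverse triangle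
inequality), and `sinh y ≥ e^y / 4` as soon as `e^{2y} ≥ 2`. With `w = π s` and `|Im s| = T > 1`
the two estimates combine into the stated bounds. -/

theorem Complex.norm_cpow_le_exp (z s : ℂ) :
    ‖z ^ s‖ ≤ Real.exp (s.re * Real.log ‖z‖ - z.arg * s.im) := by
  calc ‖z ^ s‖ ≤ ‖z‖ ^ s.re / Real.exp (z.arg * s.im) := Complex.norm_cpow_le z s
    _ ≤ Real.exp (Real.log ‖z‖ * s.re) / Real.exp (z.arg * s.im) := by
      gcongr
      exact (le_abs_self _).trans (Real.abs_rpow_le_exp_log_mul _ _)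
    _ = Real.exp (s.re * Real.log ‖z‖ - z.arg * s.im) := by
      rw [← Real.exp_sub, mul_comm]

theorem Complex.sinh_abs_im_le_norm_sin (w : ℂ) : Real.sinh |w.im| ≤ ‖Complex.sin w‖ := by
  have h2 : 2 * ‖Complex.sin w‖ = ‖Complex.exp (-w * I) - Complex.exp (w * I)‖ := by
    simpa [norm_mul] using congrArg (‖·‖) (Complex.two_sin w)
  have hexp : ‖Complex.exp (-w * I)‖ - ‖Complex.exp (w * I)‖ = 2 * Real.sinh w.im := by
    simp only [neg_mul, norm_exp, neg_re, mul_re, I_re, mul_zero, I_im, mul_one, zero_sub, neg_neg,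
      Real.sinh_eq]
    ring
  have := abs_norm_sub_norm_le (Complex.exp (-w * I)) (Complex.exp (w * I))
  rw [hexp, ← h2, abs_mul, Real.abs_sinh, abs_two] at this
  linarith

theorem Real.exp_div_four_le_sinh {y : ℝ} (hy : Real.log 2 ≤ 2 * y) :
    Real.exp y / 4 ≤ Real.sinh y := by
  have h2 : 2 ≤ Real.exp (2 * y) := by
    simpa [Real.exp_log two_pos] using Real.exp_le_exp.2 hy
  have : Real.exp (-y) * 2 ≤ Real.exp y := by
    calc Real.exp (-y) * 2 ≤ Real.exp (-y) * Real.exp (2 * y) := by gcongr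
      _ = Real.exp y := by rw [← Real.exp_add]; ring_nf
  rw [Real.sinh_eq]
  linarith

theorem Complex.norm_cpow_div_sin_le (z s : ℂ) (hs : Real.log 2 ≤ 2 * π * |s.im|) :
    ‖z ^ s / Complex.sin (π * s)‖
      ≤ 4 * Real.exp (s.re * Real.log ‖z‖) * Real.exp (-(π * |s.im| + z.arg * s.im)) := by
  have him : |((π : ℂ) * s).im| = π * |s.im| := by
    simp [abs_mul, abs_of_pos Real.pi_pos]
  have hsin : Real.exp (π * |s.im|) / 4 ≤ ‖Complex.sin (π * s)‖ := by
    have := Complex.sinh_abs_im_le_norm_sin (π * s)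
    rw [him] at this
    exact (Real.exp_div_four_le_sinh (by linarith)).trans this
  rw [norm_div, div_le_iff₀ ((by positivity : (0:ℝ) < _).trans_le hsin)]
  calc ‖z ^ s‖ ≤ Real.exp (s.re * Real.log ‖z‖ - z.arg * s.im) := Complex.norm_cpow_le_exp z s
    _ = 4 * Real.exp (s.re * Real.log ‖z‖) * Real.exp (-(π * |s.im| + z.arg * s.im))
          * (Real.exp (π * |s.im|) / 4) := by
      field_simp
      rw [← Real.exp_add, ← Real.exp_add]
      ring_nf
    _ ≤ _ := by gcongr

theorem cpow_div_sin_bound_general (T : ℝ) (hT : 1 < T) (σ : ℝ) (z : ℂ) :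
    ‖z ^ ((σ : ℂ) + Complex.I * T) / Complex.sin (π * ((σ : ℂ) + Complex.I * T))‖
        ≤ 4 * Real.exp (σ * Real.log ‖z‖) * Real.exp (-T * (π + z.arg)) ∧
      ‖z ^ ((σ : ℂ) - Complex.I * T) / Complex.sin (π * ((σ : ℂ) - Complex.I * T))‖
        ≤ 4 * Real.exp (σ * Real.log ‖z‖) * Real.exp (-T * (π - z.arg)) := by
  have hT₀ : 0 < T := one_pos.trans hT
  have hlog : Real.log 2 ≤ 2 * π * T := by
    nlinarith [Real.log_two_lt_d9, Real.pi_gt_three]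
  constructor
  · refine (Complex.norm_cpow_div_sin_le z _ ?_).trans_eq ?_
    · simpa [abs_of_pos hT₀]
    · simp [abs_of_pos hT₀, mul_comm, add_comm, mul_add]
  · refine (Complex.norm_cpow_div_sin_le z _ ?_).trans_eq ?_
    · simpa [abs_of_pos hT₀]
    · simp [abs_of_pos hT₀, mul_comm, sub_eq_add_neg, add_comm, mul_add]

theorem cpow_div_sin_bound (T : ℝ) (hT : 1 < T) (σ : ℝ) (z : ℂ)
    (hz : z ∈ Complex.slitPlane)
    (h : (0 < σ ∧ ‖z‖ < 1) ∨ (σ < 0 ∧ 1 < ‖z‖)) :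
    ‖z ^ ((σ : ℂ) + Complex.I * T) / Complex.sin (π * ((σ : ℂ) + Complex.I * T))‖
        ≤ 4 * Real.exp (σ * Real.log ‖z‖) * Real.exp (-T * (π + z.arg)) ∧
      ‖z ^ ((σ : ℂ) - Complex.I * T) / Complex.sin (π * ((σ : ℂ) - Complex.I * T))‖
        ≤ 4 * Real.exp (σ * Real.log ‖z‖) * Real.exp (-T * (π - z.arg)) :=
  cpow_div_sin_bound_general T hT σ z
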